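/- Let θ satisfy condition (A) and let φ be the quotient substitution on B = {0,…,n−1}. Then the heights coincide: m(θ) = m(φ), where m(φ) is defined analogously using a bi-infinite fixed point of φ whose 0th letter is the letter 0 ∈ B. -/

import Mathlib

/-!
The 2-block code `PsiMap c` turns the fixed point `xh` of `θ` into a fixed point of `φ`, which
agrees with `yφ` at all positive positions. Since `r ≡ 1 (mod m(θ))` and `θ` is primitive, every
letter occurs in `xh` in a single residue class mod `m(θ)`, and condition (A), through
`P(0,0,1) = P(m-1,r,2)`, makes this class `0` for the letters of `S_0`. At a positive zero `k` of
`yφ` the pair `xh[k-1,k]` lies in the class `0`, so `xh k ∈ S_0` and `m(θ) ∣ k`; hence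
`m(θ) ∣ m(φ)`. Conversely, the word `θ^K(p)[j,j+1]` representing the class `0` recurs in `xh` at
the positions `k r^(T+K) + a` (for fixed `T`, `a`) for every zero `k` of `xh`, so `m(φ)` divides
`k r^(T+K)`, hence `k`, and `m(φ) ∣ m(θ)`.
-/

open Set Topology

/-! ### Ellis semigroup of a dynamical system -/

section Ellis

variable {X : Type*} [TopologicalSpace X]

/-- The Ellis (enveloping) semigroup of a dynamical system `(X, T)`: the closure of
`{T^n : n ∈ ℤ}` in `X → X` with the topology of pointwise convergence. -/
def ellisSemigroup (T : X ≃ₜ X) : Set (X → X) :=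
  closure {f : X → X | ∃ n : ℤ, f = ⇑(T.toEquiv ^ n)}

/-- A (left) ideal of the Ellis semigroup. -/
def IsLeftIdealOf (T : X ≃ₜ X) (I : Set (X → X)) : Prop :=
  I.Nonempty ∧ I ⊆ ellisSemigroup T ∧ ∀ p ∈ ellisSemigroup T, ∀ q ∈ I, p ∘ q ∈ I

/-- A minimal left ideal of the Ellis semigroup. -/
def IsMinimalLeftIdealOf (T : X ≃ₜ X) (I : Set (X → X)) : Prop :=
  IsLeftIdealOf T I ∧ ∀ J, IsLeftIdealOf T J → J ⊆ I → J = I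

/-- Two points are proximal iff some element of the Ellis semigroup identifies them. -/
def ProximalIn (T : X ≃ₜ X) (x y : X) : Prop :=
  ∃ p ∈ ellisSemigroup T, p x = p y

end Ellis

/-! ### The shift on bi-infinite sequences and orbit closures -/

section Shift

variable {A : Type*}

/-- The shift map on bi-infinite sequences. -/
def shiftF (A : Type*) : (ℤ → A) → (ℤ → A) := fun x n => x (n + 1)

/-- The inverse shift map on bi-infinite sequences. -/
def shiftFInv (A : Type*) : (ℤ → A) → (ℤ → A) := fun x n => x (n - 1)

variable [TopologicalSpace A]

/-- The shift-orbit closure of a bi-infinite sequence. -/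
def orbitClosure (x : ℤ → A) : Set (ℤ → A) :=
  closure {y | ∃ n : ℤ, y = fun k => x (k + n)}

lemma self_mem_orbitClosure (x : ℤ → A) : x ∈ orbitClosure x :=
  subset_closure ⟨0, by funext k; simp⟩

lemma shiftF_mem_orbitClosure (x : ℤ → A) {y : ℤ → A} (hy : y ∈ orbitClosure x) :
    shiftF A y ∈ orbitClosure x := by
  have hc : Continuous (shiftF A) := continuous_pi fun n => continuous_apply (n + 1)
  have h1 := image_closure_subset_closure_image
    (s := {y : ℤ → A | ∃ n : ℤ, y = fun k => x (k + n)}) hc (mem_image_of_mem _ hy)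
  refine closure_mono ?_ h1
  rintro _ ⟨z, ⟨n, rfl⟩, rfl⟩
  refine ⟨n + 1, ?_⟩
  funext k
  show x (k + 1 + n) = x (k + (n + 1))
  congr 1; ring

lemma shiftFInv_mem_orbitClosure (x : ℤ → A) {y : ℤ → A} (hy : y ∈ orbitClosure x) :
    shiftFInv A y ∈ orbitClosure x := by
  have hc : Continuous (shiftFInv A) := continuous_pi fun n => continuous_apply (n - 1)
  have h1 := image_closure_subset_closure_image
    (s := {y : ℤ → A | ∃ n : ℤ, y = fun k => x (k + n)}) hc (mem_image_of_mem _ hy)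
  refine closure_mono ?_ h1
  rintro _ ⟨z, ⟨n, rfl⟩, rfl⟩
  refine ⟨n - 1, ?_⟩
  funext k
  show x (k - 1 + n) = x (k + (n - 1))
  congr 1; ring

/-- The shift, as a homeomorphism of the orbit closure of `x`. -/
def shiftHomOn (x : ℤ → A) : (orbitClosure x) ≃ₜ (orbitClosure x) where
  toFun y := ⟨shiftF A y.1, shiftF_mem_orbitClosure x y.2⟩
  invFun y := ⟨shiftFInv A y.1, shiftFInv_mem_orbitClosure x y.2⟩
  left_inv y := by
    apply Subtype.ext; funext k
    show y.1 (k - 1 + 1) = y.1 k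
    congr 1; ring
  right_inv y := by
    apply Subtype.ext; funext k
    show y.1 (k + 1 - 1) = y.1 k
    congr 1; ring
  continuous_toFun := Continuous.subtype_mk
    ((continuous_pi fun n => continuous_apply (n + 1)).comp continuous_subtype_val) _
  continuous_invFun := Continuous.subtype_mk
    ((continuous_pi fun n => continuous_apply (n - 1)).comp continuous_subtype_val) _

/-- The set of legal two-letter words of a subshift `Xs`. -/
def legalPairs (Xs : Set (ℤ → A)) : Set (A × A) :=
  {ab | ∃ y ∈ Xs, ∃ i : ℤ, y i = ab.1 ∧ y (i + 1) = ab.2}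

end Shift

/-! ### Substitutions of constant length -/

section Subst

variable {na r : ℕ} [NeZero na] [NeZero r]

/-- `wordIter θ k a j` is the `j`-th letter of the word `θ^k(a)` (of length `r^k`). -/
def wordIter (θ : Fin na → Fin r → Fin na) : ℕ → Fin na → ℕ → Fin na
  | 0, a, _ => a
  | k+1, a, j => wordIter θ k (θ a ⟨(j / r ^ k) % r, Nat.mod_lt _ (NeZero.pos r)⟩) (j % r ^ k)

/-- A bi-infinite fixed point of the substitution `θ`. -/
def IsSubFix (θ : Fin na → Fin r → Fin na) (x : ℤ → Fin na) : Prop :=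
  ∀ (n : ℤ) (m : Fin r), x (r * n + (m : ℕ)) = θ (x n) m

/-- `θ` is admissible: injective on letters and with non-periodic fixed points. -/
def AdmissibleSub (θ : Fin na → Fin r → Fin na) : Prop :=
  Function.Injective θ ∧
  ∀ x : ℤ → Fin na, IsSubFix θ x → ∀ p : ℤ, p ≠ 0 → ∃ k : ℤ, x (k + p) ≠ x k

/-- `θ` is primitive: some power of `θ` maps any letter to a word containing all letters. -/
def PrimitiveSub (θ : Fin na → Fin r → Fin na) : Prop :=
  ∃ k : ℕ, ∀ a b : Fin na, ∃ j < r ^ k, wordIter θ k a j = b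

/-- `θ` is coincidence-free. -/
def CoincidenceFreeSub (θ : Fin na → Fin r → Fin na) : Prop :=
  ∀ a b : Fin na, a ≠ b → ∀ m : Fin r, θ a m ≠ θ b m

/-- `θ` is in canonical form: `θ(a)` begins and ends with `a`. -/
def CanonicalFormSub (θ : Fin na → Fin r → Fin na) : Prop :=
  ∀ a, θ a ⟨0, NeZero.pos r⟩ = a ∧ θ a ⟨r - 1, Nat.sub_lt (NeZero.pos r) one_pos⟩ = a

/-- `HeightData θ xh d m` : `xh` is a bi-infinite fixed point of `θ` with `xh 0 = 0`,
`d` is the gcd of the set `M = {n ≥ 1 : xh n = 0}` of positive occurrences of `0`,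
and `m` is the height `m(θ)`: the largest divisor of `d` coprime to `r`. -/
def HeightData (θ : Fin na → Fin r → Fin na) (xh : ℤ → Fin na) (d m : ℕ) : Prop :=
  IsSubFix θ xh ∧ xh 0 = 0 ∧
  (∀ k : ℕ, 1 ≤ k → xh (k : ℤ) = 0 → d ∣ k) ∧
  (∀ e : ℕ, (∀ k : ℕ, 1 ≤ k → xh (k : ℤ) = 0 → e ∣ k) → e ∣ d) ∧
  0 < m ∧ m ∣ d ∧ Nat.Coprime m r ∧
  ∀ m' : ℕ, m' ∣ d → Nat.Coprime m' r → m' ∣ m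

/-- `z(i) = (min {n : θ(i)_n = 0}) mod m`. -/
noncomputable def subZ (θ : Fin na → Fin r → Fin na) (m : ℕ) (i : Fin na) : ℕ :=
  sInf {n : ℕ | ∃ h : n < r, θ i ⟨n, h⟩ = 0} % m

/-- The class `S_p = {i : z(i) ≡ -p (mod m)}`. -/
def subS (θ : Fin na → Fin r → Fin na) (m : ℕ) (p : ℕ) : Set (Fin na) :=
  {i | Int.ModEq (m : ℤ) (subZ θ m i : ℤ) (-(p : ℤ))}

/-- The set `P(i,j,k) = {θ^k(p)[j, j+1] : p ∈ S_i}`. -/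
def subP (θ : Fin na → Fin r → Fin na) (m : ℕ) (i j k : ℕ) : Set (Fin na × Fin na) :=
  {ab | ∃ p ∈ subS θ m i, ab = (wordIter θ k p j, wordIter θ k p (j + 1))}

/-- The collection of all classes `P(i,j,k)` for `i < m(θ)`, `k ≥ 1`, `0 ≤ j ≤ r^k - 2`. -/
def subClasses (θ : Fin na → Fin r → Fin na) (m : ℕ) : Set (Set (Fin na × Fin na)) :=
  {P | ∃ i < m, ∃ k, 1 ≤ k ∧ ∃ j, j + 2 ≤ r ^ k ∧ P = subP θ m i j k}

/-- Condition (A): the collection of the `P(i,j,k)` is a partition of the set of legal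
two-letter words. -/
def subCondA (θ : Fin na → Fin r → Fin na) (m : ℕ) (Xs : Set (ℤ → Fin na)) : Prop :=
  (∀ C ∈ subClasses θ m, C.Nonempty) ∧
  (⋃₀ subClasses θ m = legalPairs Xs) ∧
  ∀ C ∈ subClasses θ m, ∀ D ∈ subClasses θ m, C = D ∨ Disjoint C D

/-- Data of the quotient substitution `φ` on the alphabet `B = Fin n` of classes:
`c` is the labelling of legal two-letter words by their classes (with the class of words
whose last letter lies in `S_0` labelled `0`), and `φ(b)_0 = b`,
`φ(b)_h = [θ(a_b)[h-1,h]]` for `1 ≤ h ≤ r-1`, where `a_b` is any last letter of a word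
in class `b`. -/
def QuotientSubData {n : ℕ} [NeZero n] (θ : Fin na → Fin r → Fin na) (m : ℕ)
    (Xs : Set (ℤ → Fin na)) (c : Fin na × Fin na → Fin n)
    (φ : Fin n → Fin r → Fin n) : Prop :=
  (∀ b : Fin n, ∃ ab ∈ legalPairs Xs, c ab = b) ∧
  (∀ ab ∈ legalPairs Xs, ∀ cd ∈ legalPairs Xs,
    (c ab = c cd ↔ ∃ C ∈ subClasses θ m, ab ∈ C ∧ cd ∈ C)) ∧
  (∀ ab ∈ legalPairs Xs, c ab = ⟨0, NeZero.pos n⟩ → ab.2 ∈ subS θ m 0) ∧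
  (∀ b : Fin n, φ b ⟨0, NeZero.pos r⟩ = b) ∧
  ∀ b : Fin n, ∀ ab ∈ legalPairs Xs, c ab = b →
    ∀ (h : ℕ) (_ : 1 ≤ h) (hh : h < r),
      φ b ⟨h, hh⟩ = c (θ ab.2 ⟨h - 1, lt_of_le_of_lt (Nat.sub_le h 1) hh⟩, θ ab.2 ⟨h, hh⟩)

/-- The `i`-th column set `C_i = {φ(b)_i : b ∈ B}` of a substitution `φ`. -/
def colSet {n : ℕ} (φ : Fin n → Fin r → Fin n) (i : ℕ) (hi : i < r) : Set (Fin n) :=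
  {b' | ∃ b, φ b ⟨i, hi⟩ = b'}

/-- The number `q` of distinct column sets `C_1, …, C_{r-1}` of `φ`. -/
noncomputable def numColSets {n : ℕ} (φ : Fin n → Fin r → Fin n) : ℕ :=
  {C : Set (Fin n) | ∃ i, ∃ hi : i < r, 1 ≤ i ∧ C = colSet φ i hi}.ncard

/-- The 2-block sliding block code induced by a block map `c`. -/
def PsiMap {A B : Type*} (c : A × A → B) (x : ℤ → A) : ℤ → B :=
  fun i => c (x (i - 1), x i)

end Subst

/-! ### IP sets and IP cluster points -/

/-- A subset of `ℤ` is an IP set if it is the set of finite sums of a sequence of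
distinct integers. -/
def IsIPSet (Q : Set ℤ) : Prop :=
  ∃ g : ℕ → ℤ, Function.Injective g ∧
    Q = {s | ∃ F : Finset ℕ, F.Nonempty ∧ s = ∑ i ∈ F, g i}

/-- `f` is an IP cluster point of the system `(X,T)` along the IP set `P`. -/
def IsIPCP {X : Type*} [TopologicalSpace X] (T : X ≃ₜ X) (f : X → X) (P : Set ℤ) : Prop :=
  ∀ U ∈ nhds f, ∃ Q : Set ℤ, IsIPSet Q ∧ Q ⊆ {k ∈ P | ⇑(T.toEquiv ^ k) ∈ U}


lemma mk_mem_legalPairs_orbitClosure {A : Type*} [TopologicalSpace A] (x : ℤ → A) (i : ℤ) :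
    (x i, x (i + 1)) ∈ legalPairs (orbitClosure x) :=
  ⟨x, self_mem_orbitClosure x, i, rfl, rfl⟩

section Substitution

variable {na r : ℕ} {θ : Fin na → Fin r → Fin na}

lemma wordIter_succ_mul_add [NeZero r] (θ : Fin na → Fin r → Fin na) (K : ℕ) (a : Fin na)
    {q s : ℕ} (hq : q < r) (hs : s < r ^ K) :
    wordIter θ (K + 1) a (r ^ K * q + s) = wordIter θ K (θ a ⟨q, hq⟩) s := by
  have hpos : 0 < r ^ K := by omega
  have hdiv : (r ^ K * q + s) / r ^ K = q := by
    rw [Nat.mul_add_div hpos, Nat.div_eq_of_lt hs, add_zero]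
  have hmod : (r ^ K * q + s) % r ^ K = s := by
    rw [Nat.mul_add_mod, Nat.mod_eq_of_lt hs]
  simp only [wordIter, hdiv, hmod, Nat.mod_eq_of_lt hq]

lemma wordIter_one [NeZero r] (θ : Fin na → Fin r → Fin na) (a : Fin na) {j : ℕ} (hj : j < r) :
    wordIter θ 1 a j = θ a ⟨j, hj⟩ := by
  simpa [wordIter] using wordIter_succ_mul_add θ 0 a hj Nat.one_pos

lemma IsSubFix.apply_pow_mul_add [NeZero r] {x : ℤ → Fin na} (hx : IsSubFix θ x) (K : ℕ)
    (n : ℤ) {j : ℕ} (hj : j < r ^ K) : x (r ^ K * n + j) = wordIter θ K (x n) j := by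
  induction K generalizing n j with
  | zero =>
    obtain rfl : j = 0 := by simpa using hj
    simp [wordIter]
  | succ K ih =>
    have hpos : 0 < r ^ K := pow_pos (NeZero.pos r) K
    have hq : j / r ^ K < r := by
      rw [Nat.div_lt_iff_lt_mul hpos, ← pow_succ']
      exact hj
    have hj' := Nat.div_add_mod j (r ^ K)
    have hpos_eq : (r : ℤ) ^ (K + 1) * n + j
        = (r : ℤ) ^ K * (r * n + ((j / r ^ K : ℕ) : ℤ)) + ((j % r ^ K : ℕ) : ℤ) := by
      have := congrArg (Nat.cast : ℕ → ℤ) hj'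
      simp only [Nat.cast_add, Nat.cast_mul, Nat.cast_pow] at this
      linear_combination -this
    rw [hpos_eq, ih _ (Nat.mod_lt _ hpos), hx n ⟨j / r ^ K, hq⟩, ← wordIter_succ_mul_add θ K _ hq
      (Nat.mod_lt _ hpos), hj']

lemma IsSubFix.apply_mul_add {x : ℤ → Fin na} (hx : IsSubFix θ x) (n : ℤ) {h : ℕ} (hh : h < r) :
    x (r * n + h) = θ (x n) ⟨h, hh⟩ :=
  hx n ⟨h, hh⟩

lemma wordIter_two_add [NeZero r] (θ : Fin na → Fin r → Fin na) (a : Fin na) (h1r : 1 < r)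
    {s : ℕ} (hs : s < r) : wordIter θ 2 a (r + s) = θ (θ a ⟨1, h1r⟩) ⟨s, hs⟩ := by
  simpa [wordIter_one _ _ hs] using wordIter_succ_mul_add θ 1 a h1r (s := s) (by simpa using hs)

lemma IsSubFix.eq_of_forall_lt {x y : ℤ → Fin na} (hr : 2 ≤ r) (hx : IsSubFix θ x)
    (hy : IsSubFix θ y) (h : ∀ k : ℕ, 1 ≤ k → k < r → x k = y k) :
    ∀ k : ℕ, 1 ≤ k → x k = y k := by
  intro k
  induction k using Nat.strong_induction_on with
  | _ k ih =>
  intro hk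
  rcases lt_or_ge k r with hkr | hkr
  · exact h k hk hkr
  have hmod : k % r < r := Nat.mod_lt _ (by omega)
  have hk_eq : (k : ℤ) = r * (k / r : ℕ) + (k % r : ℕ) := by
    exact_mod_cast (Nat.div_add_mod k r).symm
  rw [hk_eq, hx.apply_mul_add _ hmod, hy.apply_mul_add _ hmod,
    ih _ (Nat.div_lt_self hk (by omega)) (Nat.div_pos hkr (by omega))]

lemma IsSubFix.exists_nat_eq [NeZero r] {x : ℤ → Fin na} (hx : IsSubFix θ x)
    (hprim : PrimitiveSub θ) (a : Fin na) : ∃ n : ℕ, x n = a := by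
  obtain ⟨k, hk⟩ := hprim
  obtain ⟨j, hj, hja⟩ := hk (x 0) a
  exact ⟨j, by simpa [hja] using hx.apply_pow_mul_add k 0 hj⟩

lemma IsSubFix.apply_mul [NeZero r] {x : ℤ → Fin na} (hx : IsSubFix θ x)
    (hcan : CanonicalFormSub θ) (n : ℤ) : x (r * n) = x n := by
  have h := hx n ⟨0, NeZero.pos r⟩
  rwa [(hcan _).1, Nat.cast_zero, add_zero] at h

lemma IsSubFix.apply_mul_sub_one [NeZero r] {x : ℤ → Fin na} (hx : IsSubFix θ x)
    (hcan : CanonicalFormSub θ) (n : ℤ) : x (r * n - 1) = x (n - 1) := by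
  have h := hx (n - 1) ⟨r - 1, Nat.sub_lt (NeZero.pos r) one_pos⟩
  rw [(hcan _).2, Nat.cast_sub NeZero.one_le] at h
  rw [← h]
  ring_nf

lemma zero_mem_subS_zero [NeZero na] [NeZero r] (hcan : CanonicalFormSub θ) (m : ℕ) :
    (0 : Fin na) ∈ subS θ m 0 := by
  have h : sInf {t : ℕ | ∃ h : t < r, θ 0 ⟨t, h⟩ = 0} = 0 :=
    Nat.sInf_eq_zero.mpr (Or.inl ⟨NeZero.pos r, (hcan 0).1⟩)
  simp [subS, subZ, h, Int.ModEq]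

end Substitution

namespace HeightData

variable {na r : ℕ} [NeZero na] {η : Fin na → Fin r → Fin na} {y : ℤ → Fin na}
  {d m : ℕ}

lemma dvd_of_eq_zero (h : HeightData η y d m) {k : ℕ} (hk : y k = 0) : m ∣ k := by
  obtain ⟨-, -, hd, -, -, hmd, -⟩ := h
  rcases k.eq_zero_or_pos with rfl | hk0
  · exact dvd_zero m
  · exact hmd.trans (hd k hk0 hk)

lemma dvd_of_dvd_zeros (h : HeightData η y d m) {e : ℕ} (he : e.Coprime r)
    (hz : ∀ k : ℕ, 1 ≤ k → y k = 0 → e ∣ k) : e ∣ m := by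
  obtain ⟨-, -, -, hgcd, -, -, -, hmax⟩ := h
  exact hmax e (hgcd e hz) he

lemma modEq_one [NeZero r] (h : HeightData η y d m) (hcan : CanonicalFormSub η) :
    r ≡ 1 [MOD m] := by
  have h0 : y ((r - 1 : ℕ) : ℤ) = 0 := by
    have := h.1.apply_mul_sub_one hcan 1
    rw [mul_one, sub_self, h.2.1] at this
    rwa [Nat.cast_sub NeZero.one_le, Nat.cast_one]
  exact ((Nat.modEq_iff_dvd' NeZero.one_le).mpr (h.dvd_of_eq_zero h0)).symm

lemma modEq_of_eq [NeZero r] (h : HeightData η y d m) (hcan : CanonicalFormSub η)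
    (hprim : PrimitiveSub η) {n₁ n₂ : ℕ} (heq : y n₁ = y n₂) : n₁ ≡ n₂ [MOD m] := by
  obtain ⟨k, hk⟩ := hprim
  obtain ⟨j, hj, hj0⟩ := hk (y n₁) 0
  have hzero : ∀ n : ℕ, y n = y n₁ → n + j ≡ 0 [MOD m] := by
    intro n hn
    have hy : y ((r ^ k * n + j : ℕ) : ℤ) = 0 := by
      push_cast
      rw [h.1.apply_pow_mul_add k n hj, hn, hj0]
    calc n + j = 1 ^ k * n + j := by rw [one_pow, one_mul]
      _ ≡ r ^ k * n + j [MOD m] := (((h.modEq_one hcan).pow k).symm.mul_right n).add_right j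
      _ ≡ 0 [MOD m] := Nat.modEq_zero_iff_dvd.mpr (h.dvd_of_eq_zero hy)
  exact Nat.ModEq.add_right_cancel' j ((hzero n₁ rfl).trans (hzero n₂ heq.symm).symm)

end HeightData

section ConditionA

variable {na r : ℕ} [NeZero na] {θ : Fin na → Fin r → Fin na} {xh : ℤ → Fin na} {d m : ℕ}

lemma mem_subS_iff {a : Fin na} {p : ℕ} :
    a ∈ subS θ m p ↔ (subZ θ m a : ZMod m) + p = 0 := by
  rw [subS, Set.mem_ofPred_eq, ← ZMod.intCast_eq_intCast_iff, ← eq_neg_iff_add_eq_zero]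
  push_cast
  rfl

/-- `subZ θ m a` is `0` when `θ a` contains no `0` (`sInf ∅ = 0`); for `m ≥ 2` membership in
`S_{m-1}` excludes this junk case. -/
lemma exists_eq_zero_of_mem_subS (hm : 2 ≤ m) {a : Fin na} (ha : a ∈ subS θ m (m - 1)) :
    ∃ t, ∃ ht : t < r, θ a ⟨t, ht⟩ = 0 ∧ (t : ZMod m) = 1 := by
  rw [mem_subS_iff, subZ, ZMod.natCast_mod, Nat.cast_sub (by omega), ZMod.natCast_self,
    Nat.cast_one, zero_sub, ← sub_eq_add_neg, sub_eq_zero] at ha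
  set Z := {t : ℕ | ∃ ht : t < r, θ a ⟨t, ht⟩ = 0}
  rcases Z.eq_empty_or_nonempty with hZ | hZ
  · rw [hZ, Nat.sInf_empty, Nat.cast_zero, eq_comm, ← Nat.cast_one, ZMod.natCast_eq_zero_iff] at ha
    exact absurd (Nat.le_of_dvd one_pos ha) (by omega)
  · obtain ⟨ht, hzero⟩ := Nat.sInf_mem hZ
    exact ⟨_, ht, hzero, ha⟩

lemma subP_zero_zero_one_eq [NeZero r] (hr : 2 ≤ r) (hcan : CanonicalFormSub θ)
    (hcf : CoincidenceFreeSub θ) (hht : HeightData θ xh d m)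
    (hA : subCondA θ m (orbitClosure xh)) (hm : 2 ≤ m) :
    subP θ m 0 0 1 = subP θ m (m - 1) r 2 := by
  have h1r : 1 < r := by omega
  have hθ01 : θ 0 ⟨1, h1r⟩ ≠ 0 := by
    intro h0
    have hx1 : xh ((1 : ℕ) : ℤ) = 0 := by
      simpa [hht.2.1, h0] using hht.1.apply_mul_add 0 h1r
    have := Nat.le_of_dvd one_pos (hht.dvd_of_eq_zero hx1)
    omega
  -- Both classes contain `(0, θ(0)_1) = θ²(w)[r, r+1]`, where `θ(w)_1 = 0` puts `w` in `S_{m-1}`.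
  obtain ⟨w, hw⟩ : ∃ w, θ w ⟨1, h1r⟩ = 0 :=
    Finite.injective_iff_surjective.mp (fun a b hab => by_contra fun hne => hcf a b hne _ hab) 0
  have hw_mem : w ∈ subS θ m (m - 1) := by
    have hZ : sInf {t | ∃ ht : t < r, θ w ⟨t, ht⟩ = 0} = 1 := by
      refine le_antisymm (Nat.sInf_le ⟨h1r, hw⟩) (Nat.one_le_iff_ne_zero.mpr ?_)
      rw [Ne, Nat.sInf_eq_zero, not_or]
      refine ⟨fun ⟨_, hw0⟩ => hθ01 ?_, Set.nonempty_iff_ne_empty.mp ⟨1, h1r, hw⟩⟩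
      rw [(hcan w).1] at hw0
      subst hw0
      exact hw
    rw [mem_subS_iff, subZ, hZ, ZMod.natCast_mod, ← Nat.cast_add, Nat.add_sub_cancel' (by omega),
      ZMod.natCast_self]
  have hmem₁ : ((0 : Fin na), θ 0 ⟨1, h1r⟩) ∈ subP θ m 0 0 1 :=
    ⟨0, zero_mem_subS_zero hcan m, by rw [wordIter_one θ 0 (by omega), wordIter_one, (hcan 0).1]⟩
  have hmem₂ : ((0 : Fin na), θ 0 ⟨1, h1r⟩) ∈ subP θ m (m - 1) r 2 := by
    have e₁ : wordIter θ 2 w r = 0 := by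
      have := wordIter_two_add θ w h1r (s := 0) (by omega)
      rw [hw, (hcan 0).1] at this
      exact this
    exact ⟨w, hw_mem, by rw [e₁, wordIter_two_add θ w h1r h1r, hw]⟩
  have hcl₁ : subP θ m 0 0 1 ∈ subClasses θ m := ⟨0, by omega, 1, le_rfl, 0, by simpa, rfl⟩
  have hcl₂ : subP θ m (m - 1) r 2 ∈ subClasses θ m :=
    ⟨m - 1, by omega, 2, by omega, r, by nlinarith, rfl⟩
  obtain ⟨-, -, hdisj⟩ := hA
  exact (hdisj _ hcl₁ _ hcl₂).resolve_right (Set.not_disjoint_iff.mpr ⟨_, hmem₁, hmem₂⟩)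

lemma HeightData.dvd_of_mem_subS_zero [NeZero r] (hr : 2 ≤ r) (hcan : CanonicalFormSub θ)
    (hcf : CoincidenceFreeSub θ) (hprim : PrimitiveSub θ) (hht : HeightData θ xh d m)
    (hA : subCondA θ m (orbitClosure xh)) {k : ℕ} (hk : xh k ∈ subS θ m 0) : m ∣ k := by
  have h1r : 1 < r := by omega
  have hmpos : 0 < m := hht.2.2.2.2.1
  rcases (by omega : m = 1 ∨ 2 ≤ m) with rfl | hm
  · exact one_dvd k
  have hmem : (xh k, θ (xh k) ⟨1, h1r⟩) ∈ subP θ m 0 0 1 :=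
    ⟨xh k, hk, by rw [wordIter_one θ _ (by omega), wordIter_one, (hcan _).1]⟩
  rw [subP_zero_zero_one_eq hr hcan hcf hht hA hm] at hmem
  obtain ⟨u, hu, hpair⟩ := hmem
  have hk_eq : xh k = θ u ⟨1, h1r⟩ := by
    have := wordIter_two_add θ u h1r (s := 0) (by omega)
    rw [(hcan _).1] at this
    exact (congrArg Prod.fst hpair).trans this
  -- With `xh j = u` and the first `0` of `θ(u)` at `t ≡ 1`: `k ≡ r j + 1 ≡ r j + t ≡ 0`.
  obtain ⟨t, ht, hzero, ht1⟩ := exists_eq_zero_of_mem_subS hm hu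
  obtain ⟨j, hj⟩ := hht.1.exists_nat_eq hprim u
  have h₁ : (k : ZMod m) = r * j + 1 := by
    have hxj : xh ((r * j + 1 : ℕ) : ℤ) = xh k := by
      rw [Nat.cast_add, Nat.cast_mul, hht.1.apply_mul_add j h1r, hj, hk_eq]
    exact_mod_cast (ZMod.natCast_eq_natCast_iff _ _ _).mpr (hht.modEq_of_eq hcan hprim hxj).symm
  have h₂ : ((r * j + t : ℕ) : ZMod m) = 0 := by
    refine (ZMod.natCast_eq_zero_iff _ _).mpr (hht.dvd_of_eq_zero ?_)
    push_cast
    rw [hht.1.apply_mul_add j ht, hj, hzero]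
  rw [← ZMod.natCast_eq_zero_iff]
  push_cast at h₂
  linear_combination h₁ + h₂ - ht1

end ConditionA

namespace QuotientSubData

variable {na r n : ℕ} [NeZero na] [NeZero r] [NeZero n] {θ : Fin na → Fin r → Fin na}
  {xh : ℤ → Fin na} {m : ℕ} {c : Fin na × Fin na → Fin n} {φ : Fin n → Fin r → Fin n}

lemma apply_succ (hq : QuotientSubData θ m (orbitClosure xh) c φ) {ab : Fin na × Fin na}
    (hab : ab ∈ legalPairs (orbitClosure xh)) {h : ℕ} (hh : h + 1 < r) :
    φ (c ab) ⟨h + 1, hh⟩ = c (θ ab.2 ⟨h, by omega⟩, θ ab.2 ⟨h + 1, hh⟩) :=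
  hq.2.2.2.2 _ ab hab rfl (h + 1) (by omega) hh

lemma isSubFix_psiMap (hq : QuotientSubData θ m (orbitClosure xh) c φ) (hfix : IsSubFix θ xh)
    (hcan : CanonicalFormSub θ) : IsSubFix φ (PsiMap c xh) := by
  rintro i ⟨_ | h, hh⟩
  · change c (xh (r * i + 0 - 1), xh (r * i + 0)) = φ (c (xh (i - 1), xh i)) ⟨0, hh⟩
    rw [hq.2.2.2.1, add_zero, hfix.apply_mul hcan, hfix.apply_mul_sub_one hcan]
  · have hlegal : (xh (i - 1), xh i) ∈ legalPairs (orbitClosure xh) := by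
      simpa using mk_mem_legalPairs_orbitClosure xh (i - 1)
    change c (xh (r * i + (h + 1 : ℕ) - 1), xh (r * i + (h + 1 : ℕ)))
      = φ (c (xh (i - 1), xh i)) ⟨h + 1, hh⟩
    rw [hq.apply_succ hlegal, ← hfix.apply_mul_add i, ← hfix.apply_mul_add i]
    push_cast
    ring_nf

lemma eq_psiMap (hr : 2 ≤ r) (hcan : CanonicalFormSub θ) (hprim : PrimitiveSub θ) {d : ℕ}
    (hht : HeightData θ xh d m) (hq : QuotientSubData θ m (orbitClosure xh) c φ)
    {yφ : ℤ → Fin n} {d' m' : ℕ} (hhtφ : HeightData φ yφ d' m') :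
    ∀ k : ℕ, 1 ≤ k → yφ k = PsiMap c xh k := by
  refine hhtφ.1.eq_of_forall_lt hr (hq.isSubFix_psiMap hht.1 hcan) fun k hk hkr => ?_
  -- Both sides are classes of words `θ(a)[k-1,k]` with `a ∈ S_0`, all in the class `P(0,k-1,1)`.
  obtain ⟨h, rfl⟩ := Nat.exists_eq_add_of_le' hk
  obtain ⟨ab, hab, hab0⟩ := hq.1 0
  obtain ⟨j, hj⟩ := hht.1.exists_nat_eq hprim ab.2
  have hθab : (θ ab.2 ⟨h, by omega⟩, θ ab.2 ⟨h + 1, hkr⟩) ∈ legalPairs (orbitClosure xh) := by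
    rw [← hj, ← hht.1.apply_mul_add, ← hht.1.apply_mul_add]
    exact mk_mem_legalPairs_orbitClosure xh _
  have hθ0 : (θ 0 ⟨h, by omega⟩, θ 0 ⟨h + 1, hkr⟩) = (xh h, xh (h + 1)) := by
    have h₁ := hht.1.apply_mul_add 0 (h := h) (by omega)
    have h₂ := hht.1.apply_mul_add 0 hkr
    simp only [mul_zero, zero_add, hht.2.1, Nat.cast_add, Nat.cast_one] at h₁ h₂
    rw [h₁, h₂]
  have hclass : subP θ m 0 h 1 ∈ subClasses θ m :=
    ⟨0, (hht.2.2.2.2.1 : 0 < m), 1, le_rfl, h, by rw [pow_one]; omega, rfl⟩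
  have hyφ : yφ (h + 1 : ℕ) = φ 0 ⟨h + 1, hkr⟩ := by
    simpa [hhtφ.2.1] using hhtφ.1.apply_mul_add 0 hkr
  have hψ : PsiMap c xh (h + 1 : ℕ) = c (xh h, xh (h + 1)) := by
    simp [PsiMap]
  rw [hyφ, ← hab0, hq.apply_succ hab, hψ, ← hθ0]
  refine (hq.2.1 _ hθab _ (hθ0 ▸ mk_mem_legalPairs_orbitClosure xh h)).mpr
    ⟨_, hclass, ⟨ab.2, hq.2.2.1 ab hab hab0, ?_⟩, ⟨0, zero_mem_subS_zero hcan m, ?_⟩⟩ <;>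
  rw [wordIter_one θ _ (by omega), wordIter_one]

end QuotientSubData

section Height

variable {na r n : ℕ} [NeZero na] [NeZero r] [NeZero n] {θ : Fin na → Fin r → Fin na}
  {xh : ℤ → Fin na} {d m : ℕ} {c : Fin na × Fin na → Fin n} {φ : Fin n → Fin r → Fin n}
  {yφ : ℤ → Fin n} {d' m' : ℕ}

lemma height_dvd_quotient_height (hr : 2 ≤ r) (hcan : CanonicalFormSub θ)
    (hcf : CoincidenceFreeSub θ) (hprim : PrimitiveSub θ) (hht : HeightData θ xh d m)
    (hA : subCondA θ m (orbitClosure xh)) (hq : QuotientSubData θ m (orbitClosure xh) c φ)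
    (hhtφ : HeightData φ yφ d' m') : m ∣ m' := by
  have hmr : m.Coprime r := hht.2.2.2.2.2.2.1
  refine hhtφ.dvd_of_dvd_zeros hmr fun k hk hyk => ?_
  rw [hq.eq_psiMap hr hcan hprim hht hhtφ k hk] at hyk
  have hlegal : (xh (k - 1), xh k) ∈ legalPairs (orbitClosure xh) := by
    simpa using mk_mem_legalPairs_orbitClosure xh (k - 1)
  exact hht.dvd_of_mem_subS_zero hr hcan hcf hprim hA (hq.2.2.1 _ hlegal hyk)

lemma quotient_height_dvd_height (hr : 2 ≤ r) (hcan : CanonicalFormSub θ)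
    (hprim : PrimitiveSub θ) (hht : HeightData θ xh d m)
    (hA : subCondA θ m (orbitClosure xh)) (hq : QuotientSubData θ m (orbitClosure xh) c φ)
    (hhtφ : HeightData φ yφ d' m') : m' ∣ m := by
  have hm'r : m'.Coprime r := hhtφ.2.2.2.2.2.2.1
  refine hht.dvd_of_dvd_zeros hm'r fun k _ hk => ?_
  obtain ⟨ab, hab, hab0⟩ := hq.1 0
  obtain ⟨_, ⟨-, -, K, -, j, hj, rfl⟩, p, -, rfl⟩ := hA.2.1.symm ▸ hab
  have hzero : ∀ s : ℕ, xh s = p → yφ (s * r ^ K + j + 1 : ℕ) = 0 := by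
    intro s hs
    rw [hq.eq_psiMap hr hcan hprim hht hhtφ _ (by omega), ← hab0]
    have h₁ := hht.1.apply_pow_mul_add K s (j := j) (by omega)
    have h₂ := hht.1.apply_pow_mul_add K s (j := j + 1) (by omega)
    rw [hs] at h₁ h₂
    simp only [PsiMap, ← h₁, ← h₂]
    push_cast
    ring_nf
  obtain ⟨s, hs⟩ := hht.1.exists_nat_eq hprim p
  have hsT : s < r ^ s := Nat.lt_pow_self (by omega)
  have hs' : xh (k * r ^ s + s : ℕ) = p := by
    have h₀ := hht.1.apply_pow_mul_add s 0 hsT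
    rw [mul_zero, zero_add, hht.2.1] at h₀
    push_cast
    rw [mul_comm, hht.1.apply_pow_mul_add s k hsT, hk, ← h₀, hs]
  have hdvd := (Nat.dvd_add_right (hhtφ.dvd_of_eq_zero (hzero s hs))).mp
    (show m' ∣ (s * r ^ K + j + 1) + k * r ^ (s + K) by
      convert hhtφ.dvd_of_eq_zero (hzero _ hs') using 1
      ring)
  exact (hm'r.pow_right _).dvd_of_dvd_mul_right hdvd

end Height

theorem stmt_7_general {na r : ℕ} [NeZero na] [NeZero r] (hr : 2 ≤ r)
    (θ : Fin na → Fin r → Fin na)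
    (hprim : PrimitiveSub θ) (hcf : CoincidenceFreeSub θ)
    (hcan : CanonicalFormSub θ)
    (xh : ℤ → Fin na) (d m : ℕ) (hht : HeightData θ xh d m)
    (hA : subCondA θ m (orbitClosure xh))
    (n : ℕ) [NeZero n] (c : Fin na × Fin na → Fin n) (φ : Fin n → Fin r → Fin n)
    (hq : QuotientSubData θ m (orbitClosure xh) c φ)
    (yφ : ℤ → Fin n) (d' m' : ℕ) (hhtφ : HeightData φ yφ d' m') :
    m = m' :=
  Nat.dvd_antisymm (height_dvd_quotient_height hr hcan hcf hprim hht hA hq hhtφ)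
    (quotient_height_dvd_height hr hcan hprim hht hA hq hhtφ)

/-- The heights of `θ` and of the quotient substitution `φ` coincide:
`m(θ) = m(φ)`. -/
theorem stmt_7 {na r : ℕ} [NeZero na] [NeZero r] (hr : 2 ≤ r)
    (θ : Fin na → Fin r → Fin na)
    (hadm : AdmissibleSub θ) (hprim : PrimitiveSub θ) (hcf : CoincidenceFreeSub θ)
    (hcan : CanonicalFormSub θ)
    (xh : ℤ → Fin na) (d m : ℕ) (hht : HeightData θ xh d m)
    (hA : subCondA θ m (orbitClosure xh))
    (n : ℕ) [NeZero n] (c : Fin na × Fin na → Fin n) (φ : Fin n → Fin r → Fin n)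
    (hq : QuotientSubData θ m (orbitClosure xh) c φ)
    (yφ : ℤ → Fin n) (d' m' : ℕ) (hhtφ : HeightData φ yφ d' m') :
    m = m' :=
  stmt_7_general hr θ hprim hcf hcan xh d m hht hA n c φ hq yφ d' m' hhtφ
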